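/- Let ∂ and δ be M-differentials on E(A) and E(X) respectively, with disjoint ordered sets A = {a_1 ≺ ... ≺ a_K} and X = {x_1 ≺ ... ≺ x_L}, and suppose ∂(a_1) = 0. Define ∂#δ on E(A ∪ X) by (∂#δ)(a_i) = ∂(a_i), (∂#δ)(x_i) = δ(x_i) for i < L, and (∂#δ)(x_L) = δ(x_L) + a_1. Then (∂#δ)² = 0, and ∂#δ is an M-differential with respect to the order x_1 ≺ ... ≺ x_{L-1} ≺ a_1 ≺ x_L ≺ a_2 ≺ ... ≺ a_K. -/
import Mathlib


open Submodule Module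

/-- The differential `∂#δ` on `E(A ∪ X) = (Fin K → E) × (Fin L → E)`: it acts as
`∂ ⊕ δ` except that the last basis vector `x_L` of `X` additionally receives the
summand `a_1`. -/
noncomputable def hashMap {E : Type*} [Field E] {K L : ℕ} (hK : 0 < K) (hL : 0 < L)
    (d : (Fin K → E) →ₗ[E] (Fin K → E)) (δ : (Fin L → E) →ₗ[E] (Fin L → E)) :
    ((Fin K → E) × (Fin L → E)) →ₗ[E] ((Fin K → E) × (Fin L → E)) :=
  d.prodMap δ +
    ((LinearMap.proj (⟨L - 1, by omega⟩ : Fin L)).comp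
        (LinearMap.snd E (Fin K → E) (Fin L → E))).smulRight
      ((Pi.single (⟨0, hK⟩ : Fin K) 1 : Fin K → E), 0)

/-- The position of each basis element in the order
`x_1 ≺ ... ≺ x_{L-1} ≺ a_1 ≺ x_L ≺ a_2 ≺ ... ≺ a_K`. -/
def hashOrd (K L : ℕ) : Fin K ⊕ Fin L → ℕ
  | .inl j => if (j : ℕ) = 0 then L - 1 else L + (j : ℕ)
  | .inr i => if (i : ℕ) = L - 1 then L else (i : ℕ)

/-- The basis vectors of `(Fin K → E) × (Fin L → E)`. -/
noncomputable def hashBasis (E : Type*) [Field E] {K L : ℕ} :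
    Fin K ⊕ Fin L → (Fin K → E) × (Fin L → E)
  | .inl j => (Pi.single j 1, 0)
  | .inr i => (0, Pi.single i 1)

/-- The coefficient of a basis element in a vector of `(Fin K → E) × (Fin L → E)`. -/
def hashCoeff {E : Type*} [Field E] {K L : ℕ}
    (v : (Fin K → E) × (Fin L → E)) : Fin K ⊕ Fin L → E
  | .inl j => v.1 j
  | .inr i => v.2 i

lemma hashMap_apply {E : Type*} [Field E] {K L : ℕ} (hK : 0 < K) (hL : 0 < L)
    (d : (Fin K → E) →ₗ[E] (Fin K → E)) (δ : (Fin L → E) →ₗ[E] (Fin L → E))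
    (u : Fin K → E) (v : Fin L → E) :
    hashMap hK hL d δ (u, v)
      = (d u + v ⟨L - 1, by omega⟩ • (Pi.single (⟨0, hK⟩ : Fin K) 1 : Fin K → E), δ v) := by
  simp [hashMap, Prod.ext_iff, Prod.smul_def]

lemma delta_top {E : Type*} [Field E] {L : ℕ} (hL : 0 < L)
    (δ : (Fin L → E) →ₗ[E] (Fin L → E))
    (hδlow : ∀ i j : Fin L, i ≤ j → δ (Pi.single i 1) j = 0)
    (v : Fin L → E) : δ v ⟨L - 1, by omega⟩ = 0 := by
  have hv : v = ∑ i, v i • (Pi.single i 1 : Fin L → E) := by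
    ext j
    simp [Finset.sum_apply, Pi.single_apply]
  rw [hv, map_sum]
  simp only [map_smul, Finset.sum_apply, Pi.smul_apply, smul_eq_mul]
  apply Finset.sum_eq_zero
  intro i _
  rw [hδlow i ⟨L - 1, by omega⟩ (Fin.le_def.mpr (by simp; omega)), mul_zero]

theorem stmt14 {E : Type*} [Field E] {K L : ℕ} (hK : 0 < K) (hL : 0 < L)
    (d : (Fin K → E) →ₗ[E] (Fin K → E)) (δ : (Fin L → E) →ₗ[E] (Fin L → E))
    (hd2 : d ∘ₗ d = 0) (hdlow : ∀ i j : Fin K, i ≤ j → d (Pi.single i 1) j = 0)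
    (hδ2 : δ ∘ₗ δ = 0) (hδlow : ∀ i j : Fin L, i ≤ j → δ (Pi.single i 1) j = 0)
    (ha1 : d (Pi.single (⟨0, hK⟩ : Fin K) 1) = 0) :
    hashMap hK hL d δ ∘ₗ hashMap hK hL d δ = 0 ∧
    ∀ s t : Fin K ⊕ Fin L, hashOrd K L s ≤ hashOrd K L t →
      hashCoeff (hashMap hK hL d δ (hashBasis E s)) t = 0 := by
  constructor
  · apply LinearMap.ext
    rintro ⟨u, v⟩
    rw [LinearMap.comp_apply, hashMap_apply, hashMap_apply]
    have hdd : d (d u) = 0 := DFunLike.congr_fun hd2 u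
    have hδδ : δ (δ v) = 0 := DFunLike.congr_fun hδ2 v
    have htop : δ v ⟨L - 1, by omega⟩ = 0 := delta_top hL δ hδlow v
    simp [map_add, map_smul, ha1, hdd, hδδ, htop]
  · rintro (j | i) (j' | i') hle
    · -- a_j ↦ a_{j'}
      simp only [hashMap_apply, hashBasis, hashCoeff, map_zero, Pi.zero_apply,
        zero_smul, add_zero]
      simp only [hashOrd] at hle
      by_cases hj : (j : ℕ) = 0
      · have : j = ⟨0, hK⟩ := Fin.ext hj
        rw [this, ha1]; rfl
      · rw [if_neg hj] at hle
        by_cases hj' : (j' : ℕ) = 0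
        · rw [if_pos hj'] at hle; omega
        · rw [if_neg hj'] at hle
          exact hdlow j j' (Fin.le_def.mpr (by omega))
    · -- a_j ↦ x_{i'} : coefficient is (δ 0) i' = 0
      simp [hashMap_apply, hashBasis, hashCoeff]
    · -- x_i ↦ a_{j'}
      simp only [hashMap_apply, hashBasis, hashCoeff, map_zero, zero_add]
      simp only [hashOrd] at hle
      by_cases hi : (i : ℕ) = L - 1
      · rw [if_pos hi] at hle
        have hj' : (j' : ℕ) ≠ 0 := by
          intro h; rw [if_pos h] at hle; omega
        simp [Pi.single_apply, Fin.ext_iff, hj']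
      · have : (Pi.single i (1:E) : Fin L → E) ⟨L - 1, by omega⟩ = 0 := by
          simp [Pi.single_apply, Fin.ext_iff, hi]
        simp [this]
    · -- x_i ↦ x_{i'}
      simp only [hashMap_apply, hashBasis, hashCoeff]
      simp only [hashOrd] at hle
      by_cases hi : (i : ℕ) = L - 1
      · rw [if_pos hi] at hle
        by_cases hi' : (i' : ℕ) = L - 1
        · have : i = i' := Fin.ext (by omega)
          exact this ▸ hδlow i i (le_refl i)
        · rw [if_neg hi'] at hle
          omega
      · by_cases hi' : (i' : ℕ) = L - 1
        · exact hδlow i i' (Fin.le_def.mpr (by omega))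
        · rw [if_neg hi, if_neg hi'] at hle
          exact hδlow i i' (Fin.le_def.mpr hle)
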